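/- The 2×2 matrix differential operator D(λ₁) = (1/4)(∂_x + ∂_y)·Id commutes with the matrix differential operator D(λ₂) whose entries are: [D(λ₂)]₁₁ = (e^x/(8(e^x-e^y)))(∂_x²-∂_y²) - (e^{x+y}/(4(e^x-e^y)²))(∂_x+∂_y); [D(λ₂)]₁₂ = (e^{x+y}/(16(e^x-e^y)²))(∂_x+∂_y)²; [D(λ₂)]₂₂ = (e^x/(8(e^y-e^x)))∂_x² - (1/4)∂_x∂_y + ((e^x-2e^y)/(8(e^y-e^x)))∂_y² + (e^y(2e^x+e^y)/(8(e^x-e^y)²))(∂_x+∂_y); and [D(λ₂)]₂₁ as given in the paper. That is, [D(λ₁), D(λ₂)] = 0 as operators on smooth ℂ²-valued functions on {(x,y) : e^x ≠ e^y}. -/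

import Mathlib

set_option maxHeartbeats 2000000


/-- Partial derivative in the first variable. -/
noncomputable def Dx (φ : ℝ → ℝ → ℂ) : ℝ → ℝ → ℂ := fun x y => deriv (fun s => φ s y) x

/-- Partial derivative in the second variable. -/
noncomputable def Dy (φ : ℝ → ℝ → ℂ) : ℝ → ℝ → ℂ := fun x y => deriv (fun s => φ x s) y

/-- The operator ∂_x + ∂_y. -/
noncomputable def Sop (φ : ℝ → ℝ → ℂ) : ℝ → ℝ → ℂ := fun x y => Dx φ x y + Dy φ x y

/-- e^x viewed as a complex number. -/
noncomputable def ce (x : ℝ) : ℂ := Real.exp x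

/-- D(λ₁) = (1/4)(∂_x+∂_y)·Id acting on ℂ²-valued functions. -/
noncomputable def Dlam1 (φ : Fin 2 → ℝ → ℝ → ℂ) : Fin 2 → ℝ → ℝ → ℂ :=
  fun i x y => (1 / 4) * Sop (φ i) x y

/-- Entry (1,1) of D(λ₂). -/
noncomputable def Dlam2_11 (φ : ℝ → ℝ → ℂ) : ℝ → ℝ → ℂ := fun x y =>
  ce x / (8 * (ce x - ce y)) * (Dx (Dx φ) x y - Dy (Dy φ) x y) -
    ce (x + y) / (4 * (ce x - ce y) ^ 2) * (Dx φ x y + Dy φ x y)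

/-- Entry (1,2) of D(λ₂). -/
noncomputable def Dlam2_12 (φ : ℝ → ℝ → ℂ) : ℝ → ℝ → ℂ := fun x y =>
  ce (x + y) / (16 * (ce x - ce y) ^ 2) * Sop (Sop φ) x y

/-- Entry (2,1) of D(λ₂). -/
noncomputable def Dlam2_21 (φ : ℝ → ℝ → ℂ) : ℝ → ℝ → ℂ := fun x y =>
  (1 / 8) * (ce (y - x) - ce (x - y) - 2) * Dx (Dx φ) x y +
  (1 / 8) * (ce (x - y) - ce (y - x) - 2) * Dy (Dy φ) x y +
  (1 / 2) * Dx (Dy φ) x y +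
  (ce x + ce (2 * x - y) + 5 * ce y - ce (2 * y - x)) / (4 * (ce x - ce y)) * Dx φ x y +
  (3 * ce x - ce (2 * x - y) + 3 * ce y + ce (2 * y - x)) / (4 * (ce y - ce x)) * Dy φ x y -
  ce y * (2 * ce x + ce y) / (ce x - ce y) ^ 2 * φ x y

/-- Entry (2,2) of D(λ₂). -/
noncomputable def Dlam2_22 (φ : ℝ → ℝ → ℂ) : ℝ → ℝ → ℂ := fun x y =>
  ce x / (8 * (ce y - ce x)) * Dx (Dx φ) x y - (1 / 4) * Dx (Dy φ) x y +
  (ce x - 2 * ce y) / (8 * (ce y - ce x)) * Dy (Dy φ) x y +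
  ce y * (2 * ce x + ce y) / (8 * (ce x - ce y) ^ 2) * (Dx φ x y + Dy φ x y)

/-- The matrix operator D(λ₂). -/
noncomputable def Dlam2 (φ : Fin 2 → ℝ → ℝ → ℂ) : Fin 2 → ℝ → ℝ → ℂ :=
  fun i => if i = 0 then fun x y => Dlam2_11 (φ 0) x y + Dlam2_12 (φ 1) x y
           else fun x y => Dlam2_21 (φ 0) x y + Dlam2_22 (φ 1) x y

namespace MirAux

@[fun_prop] lemma ce_diff : Differentiable ℝ ce :=
  Complex.ofRealCLM.differentiable.comp Real.differentiable_exp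

lemma ce_ne_zero (x : ℝ) : ce x ≠ 0 := by
  simp [ce, Complex.ofReal_ne_zero, Real.exp_ne_zero]

lemma ce_add (a b : ℝ) : ce (a + b) = ce a * ce b := by
  simp [ce, Real.exp_add]

lemma ce_sub (a b : ℝ) : ce (a - b) = ce a / ce b := by
  simp [ce, Real.exp_sub]

lemma ce_injective : Function.Injective ce := by
  intro a b h
  rw [ce, ce] at h
  have h2 : Real.exp a = Real.exp b := by exact_mod_cast h
  exact Real.exp_eq_exp.mp h2

def unc (φ : ℝ → ℝ → ℂ) : ℝ × ℝ → ℂ := fun p => φ p.1 p.2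

def CD (φ : ℝ → ℝ → ℂ) : Prop := ContDiff ℝ (⊤ : ℕ∞) (unc φ)

variable {φ ψ χ : ℝ → ℝ → ℂ} {x y : ℝ}

lemma CD.hasDerivAt_x (h : CD φ) (x y : ℝ) :
    HasDerivAt (fun s => φ s y) (fderiv ℝ (unc φ) (x, y) (1, 0)) x := by
  have h1 : HasDerivAt (fun s : ℝ => (s, y)) ((1 : ℝ), (0 : ℝ)) x :=
    (hasDerivAt_id x).prodMk (hasDerivAt_const x y)
  exact ((h.differentiable (by simp)) (x, y)).hasFDerivAt.comp_hasDerivAt x h1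

lemma CD.hasDerivAt_y (h : CD φ) (x y : ℝ) :
    HasDerivAt (fun t => φ x t) (fderiv ℝ (unc φ) (x, y) (0, 1)) y := by
  have h1 : HasDerivAt (fun t : ℝ => (x, t)) ((0 : ℝ), (1 : ℝ)) y :=
    (hasDerivAt_const y x).prodMk (hasDerivAt_id y)
  exact ((h.differentiable (by simp)) (x, y)).hasFDerivAt.comp_hasDerivAt y h1

lemma CD.diffx (h : CD φ) : DifferentiableAt ℝ (fun s => φ s y) x :=
  (h.hasDerivAt_x x y).differentiableAt

lemma CD.diffy (h : CD φ) : DifferentiableAt ℝ (fun t => φ x t) y :=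
  (h.hasDerivAt_y x y).differentiableAt

lemma CD.hdx (h : CD φ) : HasDerivAt (fun s => φ s y) (Dx φ x y) x :=
  h.diffx.hasDerivAt

lemma CD.hdy (h : CD φ) : HasDerivAt (fun t => φ x t) (Dy φ x y) y :=
  h.diffy.hasDerivAt

lemma Dx_eq (h : CD φ) (x y : ℝ) : Dx φ x y = fderiv ℝ (unc φ) (x, y) (1, 0) :=
  (h.hasDerivAt_x x y).deriv

lemma Dy_eq (h : CD φ) (x y : ℝ) : Dy φ x y = fderiv ℝ (unc φ) (x, y) (0, 1) :=
  (h.hasDerivAt_y x y).deriv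

lemma unc_Dx (h : CD φ) : unc (Dx φ) = fun p => fderiv ℝ (unc φ) p (1, 0) := by
  funext p
  simpa [unc] using Dx_eq h p.1 p.2

lemma unc_Dy (h : CD φ) : unc (Dy φ) = fun p => fderiv ℝ (unc φ) p (0, 1) := by
  funext p
  simpa [unc] using Dy_eq h p.1 p.2

lemma CD.dx (h : CD φ) : CD (Dx φ) := by
  rw [CD, unc_Dx h]
  exact (h.fderiv_right (by simp)).clm_apply contDiff_const

lemma CD.dy (h : CD φ) : CD (Dy φ) := by
  rw [CD, unc_Dy h]
  exact (h.fderiv_right (by simp)).clm_apply contDiff_const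

lemma swapA (h : CD φ) : Dy (Dx φ) = Dx (Dy φ) := by
  funext x y
  rw [Dy_eq h.dx x y, Dx_eq h.dy x y, unc_Dx h, unc_Dy h]
  have hd : DifferentiableAt ℝ (fderiv ℝ (unc φ)) (x, y) :=
    ((h.fderiv_right (m := (⊤ : ℕ∞)) (by simp)).differentiable (by simp)) (x, y)
  rw [fderiv_clm_apply hd (differentiableAt_const _),
      fderiv_clm_apply hd (differentiableAt_const _)]
  simp only [fderiv_const, fderiv_fun_const, Pi.zero_apply, ContinuousLinearMap.comp_zero, zero_add,
    ContinuousLinearMap.add_apply, ContinuousLinearMap.flip_apply, ContinuousLinearMap.zero_apply,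
    add_zero]
  exact (h.contDiffAt.isSymmSndFDerivAt (by rw [minSmoothness_of_isRCLikeNormedField]; exact WithTop.coe_le_coe.mpr (le_top : (2 : ℕ∞) ≤ ⊤))).eq _ _

lemma swapB (h : CD φ) : Dy (Dx (Dx φ)) = Dx (Dx (Dy φ)) := by
  rw [swapA h.dx, swapA h]

lemma swapC (h : CD φ) : Dy (Dx (Dy φ)) = Dx (Dy (Dy φ)) := swapA h.dy

lemma CD.addf (h1 : CD φ) (h2 : CD ψ) : CD (fun a b => φ a b + ψ a b) :=
  ContDiff.add h1 h2

lemma CD.cmul (c : ℂ) (h : CD φ) : CD (fun a b => c * φ a b) :=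
  ContDiff.mul contDiff_const h

lemma CD.sop (h : CD φ) : CD (Sop φ) := h.dx.addf h.dy

lemma Sop_congr (f h : ℝ → ℝ → ℂ) (x y : ℝ) (hxy : x ≠ y)
    (heq : ∀ a b, a ≠ b → f a b = h a b) : Sop f x y = Sop h x y := by
  have hx : (fun s => f s y) =ᶠ[nhds x] (fun s => h s y) := by
    filter_upwards [eventually_ne_nhds hxy] with s hs using heq s y hs
  have hy : (fun t => f x t) =ᶠ[nhds y] (fun t => h x t) := by
    filter_upwards [eventually_ne_nhds (Ne.symm hxy)] with t ht using heq x t (Ne.symm ht)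
  show deriv _ x + deriv _ y = deriv _ x + deriv _ y
  rw [hx.deriv_eq, hy.deriv_eq]

lemma Dx_addf (h1 : CD φ) (h2 : CD ψ) :
    Dx (fun a b => φ a b + ψ a b) = fun a b => Dx φ a b + Dx ψ a b := by
  funext a b
  exact deriv_add h1.diffx h2.diffx

lemma Dy_addf (h1 : CD φ) (h2 : CD ψ) :
    Dy (fun a b => φ a b + ψ a b) = fun a b => Dy φ a b + Dy ψ a b := by
  funext a b
  exact deriv_add h1.diffy h2.diffy

lemma Dx_cmul (c : ℂ) (φ : ℝ → ℝ → ℂ) :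
    Dx (fun a b => c * φ a b) = fun a b => c * Dx φ a b := by
  funext a b
  exact deriv_const_mul_field c

lemma Dy_cmul (c : ℂ) (φ : ℝ → ℝ → ℂ) :
    Dy (fun a b => c * φ a b) = fun a b => c * Dy φ a b := by
  funext a b
  exact deriv_const_mul_field c

lemma Sop_eq : Sop φ = fun a b => Dx φ a b + Dy φ a b := rfl

lemma Dx_sop (h : CD φ) : Dx (Sop φ) = fun a b => Dx (Dx φ) a b + Dx (Dy φ) a b :=
  Dx_addf h.dx h.dy

lemma Dy_sop (h : CD φ) : Dy (Sop φ) = fun a b => Dx (Dy φ) a b + Dy (Dy φ) a b := by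
  rw [Sop_eq, Dy_addf h.dx h.dy, swapA h]

lemma SopSop (h : CD φ) :
    Sop (Sop φ) = fun a b => Dx (Dx φ) a b + 2 * Dx (Dy φ) a b + Dy (Dy φ) a b := by
  rw [Sop_eq (φ := Sop φ), Dx_sop h, Dy_sop h]
  funext a b; ring

lemma rho_x (h : CD φ) :
    Dx (fun a b => (1/4 : ℂ) * Sop φ a b) =
      fun a b => (1/4 : ℂ) * (Dx (Dx φ) a b + Dx (Dy φ) a b) := by
  rw [Dx_cmul, Dx_sop h]

lemma rho_y (h : CD φ) :
    Dy (fun a b => (1/4 : ℂ) * Sop φ a b) =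
      fun a b => (1/4 : ℂ) * (Dx (Dy φ) a b + Dy (Dy φ) a b) := by
  rw [Dy_cmul, Dy_sop h]

lemma rho_xx (h : CD φ) :
    Dx (Dx (fun a b => (1/4 : ℂ) * Sop φ a b)) =
      fun a b => (1/4 : ℂ) * (Dx (Dx (Dx φ)) a b + Dx (Dx (Dy φ)) a b) := by
  rw [rho_x h, Dx_cmul, Dx_addf h.dx.dx h.dy.dx]

lemma rho_xy (h : CD φ) :
    Dx (Dy (fun a b => (1/4 : ℂ) * Sop φ a b)) =
      fun a b => (1/4 : ℂ) * (Dx (Dx (Dy φ)) a b + Dx (Dy (Dy φ)) a b) := by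
  rw [rho_y h, Dx_cmul, Dx_addf h.dy.dx h.dy.dy]

lemma rho_yy (h : CD φ) :
    Dy (Dy (fun a b => (1/4 : ℂ) * Sop φ a b)) =
      fun a b => (1/4 : ℂ) * (Dx (Dy (Dy φ)) a b + Dy (Dy (Dy φ)) a b) := by
  rw [rho_y h, Dy_cmul, Dy_addf h.dy.dx h.dy.dy, swapA h.dy]

lemma CD.rho (h : CD φ) : CD (fun a b => (1/4 : ℂ) * Sop φ a b) := CD.cmul _ h.sop

lemma rho_ss (h : CD φ) :
    Sop (Sop (fun a b => (1/4 : ℂ) * Sop φ a b)) =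
      fun a b => (1/4 : ℂ) * (Dx (Dx (Dx φ)) a b + 3 * Dx (Dx (Dy φ)) a b
        + 3 * Dx (Dy (Dy φ)) a b + Dy (Dy (Dy φ)) a b) := by
  rw [SopSop h.rho, rho_xx h, rho_xy h, rho_yy h]
  funext a b; ring

lemma Sop7
    (g1 g2 g3 g4 g5 g6 g7 : ℝ → ℂ) (L1 L2 L3 L4 L5 L6 L7 : ℝ → ℝ → ℂ) (x y : ℝ)
    (hg1 : DifferentiableAt ℝ g1 (x - y))
    (hg2 : DifferentiableAt ℝ g2 (x - y))
    (hg3 : DifferentiableAt ℝ g3 (x - y))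
    (hg4 : DifferentiableAt ℝ g4 (x - y))
    (hg5 : DifferentiableAt ℝ g5 (x - y))
    (hg6 : DifferentiableAt ℝ g6 (x - y))
    (hg7 : DifferentiableAt ℝ g7 (x - y))
    (hx1 : HasDerivAt (fun s => L1 s y) (Dx L1 x y) x)
    (hx2 : HasDerivAt (fun s => L2 s y) (Dx L2 x y) x)
    (hx3 : HasDerivAt (fun s => L3 s y) (Dx L3 x y) x)
    (hx4 : HasDerivAt (fun s => L4 s y) (Dx L4 x y) x)
    (hx5 : HasDerivAt (fun s => L5 s y) (Dx L5 x y) x)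
    (hx6 : HasDerivAt (fun s => L6 s y) (Dx L6 x y) x)
    (hx7 : HasDerivAt (fun s => L7 s y) (Dx L7 x y) x)
    (hy1 : HasDerivAt (fun t => L1 x t) (Dy L1 x y) y)    (hy2 : HasDerivAt (fun t => L2 x t) (Dy L2 x y) y)    (hy3 : HasDerivAt (fun t => L3 x t) (Dy L3 x y) y)    (hy4 : HasDerivAt (fun t => L4 x t) (Dy L4 x y) y)    (hy5 : HasDerivAt (fun t => L5 x t) (Dy L5 x y) y)    (hy6 : HasDerivAt (fun t => L6 x t) (Dy L6 x y) y)    (hy7 : HasDerivAt (fun t => L7 x t) (Dy L7 x y) y) :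
    Sop (fun a b => g1 (a - b) * L1 a b + (g2 (a - b) * L2 a b + (g3 (a - b) * L3 a b + (g4 (a - b) * L4 a b + (g5 (a - b) * L5 a b + (g6 (a - b) * L6 a b + (g7 (a - b) * L7 a b))))))) x y
      = g1 (x - y) * (Dx L1 x y + Dy L1 x y) + g2 (x - y) * (Dx L2 x y + Dy L2 x y) + g3 (x - y) * (Dx L3 x y + Dy L3 x y) + g4 (x - y) * (Dx L4 x y + Dy L4 x y) + g5 (x - y) * (Dx L5 x y + Dy L5 x y) + g6 (x - y) * (Dx L6 x y + Dy L6 x y) + g7 (x - y) * (Dx L7 x y + Dy L7 x y) := by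
  have X := ((HasDerivAt.comp_sub_const x y hg1.hasDerivAt).mul hx1).add
      (((HasDerivAt.comp_sub_const x y hg2.hasDerivAt).mul hx2).add
      (((HasDerivAt.comp_sub_const x y hg3.hasDerivAt).mul hx3).add
      (((HasDerivAt.comp_sub_const x y hg4.hasDerivAt).mul hx4).add
      (((HasDerivAt.comp_sub_const x y hg5.hasDerivAt).mul hx5).add
      (((HasDerivAt.comp_sub_const x y hg6.hasDerivAt).mul hx6).add
      (((HasDerivAt.comp_sub_const x y hg7.hasDerivAt).mul hx7)))))))
  have Y := ((HasDerivAt.comp_const_sub x y hg1.hasDerivAt).mul hy1).add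
      (((HasDerivAt.comp_const_sub x y hg2.hasDerivAt).mul hy2).add
      (((HasDerivAt.comp_const_sub x y hg3.hasDerivAt).mul hy3).add
      (((HasDerivAt.comp_const_sub x y hg4.hasDerivAt).mul hy4).add
      (((HasDerivAt.comp_const_sub x y hg5.hasDerivAt).mul hy5).add
      (((HasDerivAt.comp_const_sub x y hg6.hasDerivAt).mul hy6).add
      (((HasDerivAt.comp_const_sub x y hg7.hasDerivAt).mul hy7)))))))
  have ex : deriv (fun s => g1 (s - y) * L1 s y + (g2 (s - y) * L2 s y + (g3 (s - y) * L3 s y + (g4 (s - y) * L4 s y + (g5 (s - y) * L5 s y + (g6 (s - y) * L6 s y + (g7 (s - y) * L7 s y))))))) x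
      = (deriv g1 (x - y) * L1 x y + g1 (x - y) * Dx L1 x y) + ((deriv g2 (x - y) * L2 x y + g2 (x - y) * Dx L2 x y) + ((deriv g3 (x - y) * L3 x y + g3 (x - y) * Dx L3 x y) + ((deriv g4 (x - y) * L4 x y + g4 (x - y) * Dx L4 x y) + ((deriv g5 (x - y) * L5 x y + g5 (x - y) * Dx L5 x y) + ((deriv g6 (x - y) * L6 x y + g6 (x - y) * Dx L6 x y) + ((deriv g7 (x - y) * L7 x y + g7 (x - y) * Dx L7 x y))))))) := X.deriv
  have ey : deriv (fun t => g1 (x - t) * L1 x t + (g2 (x - t) * L2 x t + (g3 (x - t) * L3 x t + (g4 (x - t) * L4 x t + (g5 (x - t) * L5 x t + (g6 (x - t) * L6 x t + (g7 (x - t) * L7 x t))))))) y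
      = (-deriv g1 (x - y) * L1 x y + g1 (x - y) * Dy L1 x y) + ((-deriv g2 (x - y) * L2 x y + g2 (x - y) * Dy L2 x y) + ((-deriv g3 (x - y) * L3 x y + g3 (x - y) * Dy L3 x y) + ((-deriv g4 (x - y) * L4 x y + g4 (x - y) * Dy L4 x y) + ((-deriv g5 (x - y) * L5 x y + g5 (x - y) * Dy L5 x y) + ((-deriv g6 (x - y) * L6 x y + g6 (x - y) * Dy L6 x y) + ((-deriv g7 (x - y) * L7 x y + g7 (x - y) * Dy L7 x y))))))) := Y.deriv
  rw [show Sop (fun a b => g1 (a - b) * L1 a b + (g2 (a - b) * L2 a b + (g3 (a - b) * L3 a b + (g4 (a - b) * L4 a b + (g5 (a - b) * L5 a b + (g6 (a - b) * L6 a b + (g7 (a - b) * L7 a b))))))) x y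
      = deriv (fun s => g1 (s - y) * L1 s y + (g2 (s - y) * L2 s y + (g3 (s - y) * L3 s y + (g4 (s - y) * L4 s y + (g5 (s - y) * L5 s y + (g6 (s - y) * L6 s y + (g7 (s - y) * L7 s y))))))) x + deriv (fun t => g1 (x - t) * L1 x t + (g2 (x - t) * L2 x t + (g3 (x - t) * L3 x t + (g4 (x - t) * L4 x t + (g5 (x - t) * L5 x t + (g6 (x - t) * L6 x t + (g7 (x - t) * L7 x t))))))) y from rfl]
  rw [ex, ey]
  ring

lemma Sop11
    (g1 g2 g3 g4 g5 g6 g7 g8 g9 g10 g11 : ℝ → ℂ) (L1 L2 L3 L4 L5 L6 L7 L8 L9 L10 L11 : ℝ → ℝ → ℂ) (x y : ℝ)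
    (hg1 : DifferentiableAt ℝ g1 (x - y))
    (hg2 : DifferentiableAt ℝ g2 (x - y))
    (hg3 : DifferentiableAt ℝ g3 (x - y))
    (hg4 : DifferentiableAt ℝ g4 (x - y))
    (hg5 : DifferentiableAt ℝ g5 (x - y))
    (hg6 : DifferentiableAt ℝ g6 (x - y))
    (hg7 : DifferentiableAt ℝ g7 (x - y))
    (hg8 : DifferentiableAt ℝ g8 (x - y))
    (hg9 : DifferentiableAt ℝ g9 (x - y))
    (hg10 : DifferentiableAt ℝ g10 (x - y))
    (hg11 : DifferentiableAt ℝ g11 (x - y))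
    (hx1 : HasDerivAt (fun s => L1 s y) (Dx L1 x y) x)
    (hx2 : HasDerivAt (fun s => L2 s y) (Dx L2 x y) x)
    (hx3 : HasDerivAt (fun s => L3 s y) (Dx L3 x y) x)
    (hx4 : HasDerivAt (fun s => L4 s y) (Dx L4 x y) x)
    (hx5 : HasDerivAt (fun s => L5 s y) (Dx L5 x y) x)
    (hx6 : HasDerivAt (fun s => L6 s y) (Dx L6 x y) x)
    (hx7 : HasDerivAt (fun s => L7 s y) (Dx L7 x y) x)
    (hx8 : HasDerivAt (fun s => L8 s y) (Dx L8 x y) x)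
    (hx9 : HasDerivAt (fun s => L9 s y) (Dx L9 x y) x)
    (hx10 : HasDerivAt (fun s => L10 s y) (Dx L10 x y) x)
    (hx11 : HasDerivAt (fun s => L11 s y) (Dx L11 x y) x)
    (hy1 : HasDerivAt (fun t => L1 x t) (Dy L1 x y) y)    (hy2 : HasDerivAt (fun t => L2 x t) (Dy L2 x y) y)    (hy3 : HasDerivAt (fun t => L3 x t) (Dy L3 x y) y)    (hy4 : HasDerivAt (fun t => L4 x t) (Dy L4 x y) y)    (hy5 : HasDerivAt (fun t => L5 x t) (Dy L5 x y) y)    (hy6 : HasDerivAt (fun t => L6 x t) (Dy L6 x y) y)    (hy7 : HasDerivAt (fun t => L7 x t) (Dy L7 x y) y)    (hy8 : HasDerivAt (fun t => L8 x t) (Dy L8 x y) y)    (hy9 : HasDerivAt (fun t => L9 x t) (Dy L9 x y) y)    (hy10 : HasDerivAt (fun t => L10 x t) (Dy L10 x y) y)    (hy11 : HasDerivAt (fun t => L11 x t) (Dy L11 x y) y) :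
    Sop (fun a b => g1 (a - b) * L1 a b + (g2 (a - b) * L2 a b + (g3 (a - b) * L3 a b + (g4 (a - b) * L4 a b + (g5 (a - b) * L5 a b + (g6 (a - b) * L6 a b + (g7 (a - b) * L7 a b + (g8 (a - b) * L8 a b + (g9 (a - b) * L9 a b + (g10 (a - b) * L10 a b + (g11 (a - b) * L11 a b))))))))))) x y
      = g1 (x - y) * (Dx L1 x y + Dy L1 x y) + g2 (x - y) * (Dx L2 x y + Dy L2 x y) + g3 (x - y) * (Dx L3 x y + Dy L3 x y) + g4 (x - y) * (Dx L4 x y + Dy L4 x y) + g5 (x - y) * (Dx L5 x y + Dy L5 x y) + g6 (x - y) * (Dx L6 x y + Dy L6 x y) + g7 (x - y) * (Dx L7 x y + Dy L7 x y) + g8 (x - y) * (Dx L8 x y + Dy L8 x y) + g9 (x - y) * (Dx L9 x y + Dy L9 x y) + g10 (x - y) * (Dx L10 x y + Dy L10 x y) + g11 (x - y) * (Dx L11 x y + Dy L11 x y) := by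
  have X := ((HasDerivAt.comp_sub_const x y hg1.hasDerivAt).mul hx1).add
      (((HasDerivAt.comp_sub_const x y hg2.hasDerivAt).mul hx2).add
      (((HasDerivAt.comp_sub_const x y hg3.hasDerivAt).mul hx3).add
      (((HasDerivAt.comp_sub_const x y hg4.hasDerivAt).mul hx4).add
      (((HasDerivAt.comp_sub_const x y hg5.hasDerivAt).mul hx5).add
      (((HasDerivAt.comp_sub_const x y hg6.hasDerivAt).mul hx6).add
      (((HasDerivAt.comp_sub_const x y hg7.hasDerivAt).mul hx7).add
      (((HasDerivAt.comp_sub_const x y hg8.hasDerivAt).mul hx8).add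
      (((HasDerivAt.comp_sub_const x y hg9.hasDerivAt).mul hx9).add
      (((HasDerivAt.comp_sub_const x y hg10.hasDerivAt).mul hx10).add
      (((HasDerivAt.comp_sub_const x y hg11.hasDerivAt).mul hx11)))))))))))
  have Y := ((HasDerivAt.comp_const_sub x y hg1.hasDerivAt).mul hy1).add
      (((HasDerivAt.comp_const_sub x y hg2.hasDerivAt).mul hy2).add
      (((HasDerivAt.comp_const_sub x y hg3.hasDerivAt).mul hy3).add
      (((HasDerivAt.comp_const_sub x y hg4.hasDerivAt).mul hy4).add
      (((HasDerivAt.comp_const_sub x y hg5.hasDerivAt).mul hy5).add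
      (((HasDerivAt.comp_const_sub x y hg6.hasDerivAt).mul hy6).add
      (((HasDerivAt.comp_const_sub x y hg7.hasDerivAt).mul hy7).add
      (((HasDerivAt.comp_const_sub x y hg8.hasDerivAt).mul hy8).add
      (((HasDerivAt.comp_const_sub x y hg9.hasDerivAt).mul hy9).add
      (((HasDerivAt.comp_const_sub x y hg10.hasDerivAt).mul hy10).add
      (((HasDerivAt.comp_const_sub x y hg11.hasDerivAt).mul hy11)))))))))))
  have ex : deriv (fun s => g1 (s - y) * L1 s y + (g2 (s - y) * L2 s y + (g3 (s - y) * L3 s y + (g4 (s - y) * L4 s y + (g5 (s - y) * L5 s y + (g6 (s - y) * L6 s y + (g7 (s - y) * L7 s y + (g8 (s - y) * L8 s y + (g9 (s - y) * L9 s y + (g10 (s - y) * L10 s y + (g11 (s - y) * L11 s y))))))))))) x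
      = (deriv g1 (x - y) * L1 x y + g1 (x - y) * Dx L1 x y) + ((deriv g2 (x - y) * L2 x y + g2 (x - y) * Dx L2 x y) + ((deriv g3 (x - y) * L3 x y + g3 (x - y) * Dx L3 x y) + ((deriv g4 (x - y) * L4 x y + g4 (x - y) * Dx L4 x y) + ((deriv g5 (x - y) * L5 x y + g5 (x - y) * Dx L5 x y) + ((deriv g6 (x - y) * L6 x y + g6 (x - y) * Dx L6 x y) + ((deriv g7 (x - y) * L7 x y + g7 (x - y) * Dx L7 x y) + ((deriv g8 (x - y) * L8 x y + g8 (x - y) * Dx L8 x y) + ((deriv g9 (x - y) * L9 x y + g9 (x - y) * Dx L9 x y) + ((deriv g10 (x - y) * L10 x y + g10 (x - y) * Dx L10 x y) + ((deriv g11 (x - y) * L11 x y + g11 (x - y) * Dx L11 x y))))))))))) := X.deriv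
  have ey : deriv (fun t => g1 (x - t) * L1 x t + (g2 (x - t) * L2 x t + (g3 (x - t) * L3 x t + (g4 (x - t) * L4 x t + (g5 (x - t) * L5 x t + (g6 (x - t) * L6 x t + (g7 (x - t) * L7 x t + (g8 (x - t) * L8 x t + (g9 (x - t) * L9 x t + (g10 (x - t) * L10 x t + (g11 (x - t) * L11 x t))))))))))) y
      = (-deriv g1 (x - y) * L1 x y + g1 (x - y) * Dy L1 x y) + ((-deriv g2 (x - y) * L2 x y + g2 (x - y) * Dy L2 x y) + ((-deriv g3 (x - y) * L3 x y + g3 (x - y) * Dy L3 x y) + ((-deriv g4 (x - y) * L4 x y + g4 (x - y) * Dy L4 x y) + ((-deriv g5 (x - y) * L5 x y + g5 (x - y) * Dy L5 x y) + ((-deriv g6 (x - y) * L6 x y + g6 (x - y) * Dy L6 x y) + ((-deriv g7 (x - y) * L7 x y + g7 (x - y) * Dy L7 x y) + ((-deriv g8 (x - y) * L8 x y + g8 (x - y) * Dy L8 x y) + ((-deriv g9 (x - y) * L9 x y + g9 (x - y) * Dy L9 x y) + ((-deriv g10 (x - y) * L10 x y + g10 (x - y) * Dy L10 x y) + ((-deriv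 g11 (x - y) * L11 x y + g11 (x - y) * Dy L11 x y))))))))))) := Y.deriv
  rw [show Sop (fun a b => g1 (a - b) * L1 a b + (g2 (a - b) * L2 a b + (g3 (a - b) * L3 a b + (g4 (a - b) * L4 a b + (g5 (a - b) * L5 a b + (g6 (a - b) * L6 a b + (g7 (a - b) * L7 a b + (g8 (a - b) * L8 a b + (g9 (a - b) * L9 a b + (g10 (a - b) * L10 a b + (g11 (a - b) * L11 a b))))))))))) x y
      = deriv (fun s => g1 (s - y) * L1 s y + (g2 (s - y) * L2 s y + (g3 (s - y) * L3 s y + (g4 (s - y) * L4 s y + (g5 (s - y) * L5 s y + (g6 (s - y) * L6 s y + (g7 (s - y) * L7 s y + (g8 (s - y) * L8 s y + (g9 (s - y) * L9 s y + (g10 (s - y) * L10 s y + (g11 (s - y) * L11 s y))))))))))) x + deriv (fun t => g1 (x - t) * L1 x t + (g2 (x - t) * L2 x t + (g3 (x - t) * L3 x t + (g4 (x - t) * L4 x t + (g5 (x - t) * L5 x t + (g6 (x - t) * L6 x t + (g7 (x - t) * L7 x t + (g8 (x - t) * L8 x t + (g9 (x - t) * L9 x t + (g10 (x - t) * L10 x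 t + (g11 (x - t) * L11 x t))))))))))) y from rfl]
  rw [ex, ey]
  ring

lemma co0_1 (a b : ℝ) (hEa : ce a ≠ 0) (hEb : ce b ≠ 0) (hEab : ce a - ce b ≠ 0) :
    (2 * ce (a - b) * (ce (a - b) - 1)) / (16 * (ce (a - b) - 1) ^ 2) = ce a / (8 * (ce a - ce b)) := by
  have hEba : ce b - ce a ≠ 0 := by
    rw [show ce b - ce a = -(ce a - ce b) by ring]; exact neg_ne_zero.mpr hEab
  have hc : ce (a - b) * ce b = ce a := by
    rw [← ce_add, show a - b + b = a by ring]
  have hcne : ce (a - b) ≠ 0 := ce_ne_zero _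
  rw [← hc] at hEab hEba
  try simp only [← hc]
  have hc1 : ce (a - b) - 1 ≠ 0 := by
    intro h
    apply hEab
    rw [show ce (a - b) * ce b - ce b = ce b * (ce (a - b) - 1) by ring, h, mul_zero]
  field_simp
  ring

lemma co0_2 (a b : ℝ) (hEa : ce a ≠ 0) (hEb : ce b ≠ 0) (hEab : ce a - ce b ≠ 0) :
    (-(2 * ce (a - b) * (ce (a - b) - 1))) / (16 * (ce (a - b) - 1) ^ 2) = -(ce a / (8 * (ce a - ce b))) := by
  have hEba : ce b - ce a ≠ 0 := by
    rw [show ce b - ce a = -(ce a - ce b) by ring]; exact neg_ne_zero.mpr hEab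
  have hc : ce (a - b) * ce b = ce a := by
    rw [← ce_add, show a - b + b = a by ring]
  have hcne : ce (a - b) ≠ 0 := ce_ne_zero _
  rw [← hc] at hEab hEba
  try simp only [← hc]
  have hc1 : ce (a - b) - 1 ≠ 0 := by
    intro h
    apply hEab
    rw [show ce (a - b) * ce b - ce b = ce b * (ce (a - b) - 1) by ring, h, mul_zero]
  field_simp
  ring

lemma co0_3 (a b : ℝ) (hEa : ce a ≠ 0) (hEb : ce b ≠ 0) (hEab : ce a - ce b ≠ 0) :
    (-(4 * ce (a - b))) / (16 * (ce (a - b) - 1) ^ 2) = -(ce a * ce b / (4 * (ce a - ce b) ^ 2)) := by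
  have hEba : ce b - ce a ≠ 0 := by
    rw [show ce b - ce a = -(ce a - ce b) by ring]; exact neg_ne_zero.mpr hEab
  have hc : ce (a - b) * ce b = ce a := by
    rw [← ce_add, show a - b + b = a by ring]
  have hcne : ce (a - b) ≠ 0 := ce_ne_zero _
  rw [← hc] at hEab hEba
  try simp only [← hc]
  have hc1 : ce (a - b) - 1 ≠ 0 := by
    intro h
    apply hEab
    rw [show ce (a - b) * ce b - ce b = ce b * (ce (a - b) - 1) by ring, h, mul_zero]
  field_simp
  ring

lemma co0_5 (a b : ℝ) (hEa : ce a ≠ 0) (hEb : ce b ≠ 0) (hEab : ce a - ce b ≠ 0) :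
    (ce (a - b)) / (16 * (ce (a - b) - 1) ^ 2) = ce a * ce b / (16 * (ce a - ce b) ^ 2) := by
  have hEba : ce b - ce a ≠ 0 := by
    rw [show ce b - ce a = -(ce a - ce b) by ring]; exact neg_ne_zero.mpr hEab
  have hc : ce (a - b) * ce b = ce a := by
    rw [← ce_add, show a - b + b = a by ring]
  have hcne : ce (a - b) ≠ 0 := ce_ne_zero _
  rw [← hc] at hEab hEba
  try simp only [← hc]
  have hc1 : ce (a - b) - 1 ≠ 0 := by
    intro h
    apply hEab
    rw [show ce (a - b) * ce b - ce b = ce b * (ce (a - b) - 1) by ring, h, mul_zero]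
  field_simp

lemma co0_6 (a b : ℝ) (hEa : ce a ≠ 0) (hEb : ce b ≠ 0) (hEab : ce a - ce b ≠ 0) :
    (2 * ce (a - b)) / (16 * (ce (a - b) - 1) ^ 2) = 2 * (ce a * ce b / (16 * (ce a - ce b) ^ 2)) := by
  have hEba : ce b - ce a ≠ 0 := by
    rw [show ce b - ce a = -(ce a - ce b) by ring]; exact neg_ne_zero.mpr hEab
  have hc : ce (a - b) * ce b = ce a := by
    rw [← ce_add, show a - b + b = a by ring]
  have hcne : ce (a - b) ≠ 0 := ce_ne_zero _
  rw [← hc] at hEab hEba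
  try simp only [← hc]
  have hc1 : ce (a - b) - 1 ≠ 0 := by
    intro h
    apply hEab
    rw [show ce (a - b) * ce b - ce b = ce b * (ce (a - b) - 1) by ring, h, mul_zero]
  field_simp

lemma co1_1 (a b : ℝ) (hEa : ce a ≠ 0) (hEb : ce b ≠ 0) (hEab : ce a - ce b ≠ 0) :
    ((1 - ce (a - b) ^ 2 - 2 * ce (a - b)) * (ce (a - b) - 1) ^ 2) / (8 * ce (a - b) * (ce (a - b) - 1) ^ 2) = 1 / 8 * (ce b / ce a - ce a / ce b - 2) := by
  have hEba : ce b - ce a ≠ 0 := by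
    rw [show ce b - ce a = -(ce a - ce b) by ring]; exact neg_ne_zero.mpr hEab
  have hc : ce (a - b) * ce b = ce a := by
    rw [← ce_add, show a - b + b = a by ring]
  have hcne : ce (a - b) ≠ 0 := ce_ne_zero _
  rw [← hc] at hEab hEba
  try simp only [← hc]
  have hc1 : ce (a - b) - 1 ≠ 0 := by
    intro h
    apply hEab
    rw [show ce (a - b) * ce b - ce b = ce b * (ce (a - b) - 1) by ring, h, mul_zero]
  field_simp

lemma co1_2 (a b : ℝ) (hEa : ce a ≠ 0) (hEb : ce b ≠ 0) (hEab : ce a - ce b ≠ 0) :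
    ((ce (a - b) ^ 2 - 2 * ce (a - b) - 1) * (ce (a - b) - 1) ^ 2) / (8 * ce (a - b) * (ce (a - b) - 1) ^ 2) = 1 / 8 * (ce a / ce b - ce b / ce a - 2) := by
  have hEba : ce b - ce a ≠ 0 := by
    rw [show ce b - ce a = -(ce a - ce b) by ring]; exact neg_ne_zero.mpr hEab
  have hc : ce (a - b) * ce b = ce a := by
    rw [← ce_add, show a - b + b = a by ring]
  have hcne : ce (a - b) ≠ 0 := ce_ne_zero _
  rw [← hc] at hEab hEba
  try simp only [← hc]
  have hc1 : ce (a - b) - 1 ≠ 0 := by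
    intro h
    apply hEab
    rw [show ce (a - b) * ce b - ce b = ce b * (ce (a - b) - 1) by ring, h, mul_zero]
  field_simp
  ring

lemma co1_3 (a b : ℝ) (hEa : ce a ≠ 0) (hEb : ce b ≠ 0) (hEab : ce a - ce b ≠ 0) :
    (4 * ce (a - b) * (ce (a - b) - 1) ^ 2) / (8 * ce (a - b) * (ce (a - b) - 1) ^ 2) = (1 / 2 : ℂ) := by
  have hEba : ce b - ce a ≠ 0 := by
    rw [show ce b - ce a = -(ce a - ce b) by ring]; exact neg_ne_zero.mpr hEab
  have hc : ce (a - b) * ce b = ce a := by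
    rw [← ce_add, show a - b + b = a by ring]
  have hcne : ce (a - b) ≠ 0 := ce_ne_zero _
  rw [← hc] at hEab hEba
  try simp only [← hc]
  have hc1 : ce (a - b) - 1 ≠ 0 := by
    intro h
    apply hEab
    rw [show ce (a - b) * ce b - ce b = ce b * (ce (a - b) - 1) by ring, h, mul_zero]
  field_simp
  ring

lemma co1_4 (a b : ℝ) (hEa : ce a ≠ 0) (hEb : ce b ≠ 0) (hEab : ce a - ce b ≠ 0) :
    (2 * (ce (a - b) ^ 2 + ce (a - b) ^ 3 + 5 * ce (a - b) - 1) * (ce (a - b) - 1)) / (8 * ce (a - b) * (ce (a - b) - 1) ^ 2) = (ce a + ce a * ce a / ce b + 5 * ce b - ce b * ce b / ce a) / (4 * (ce a - ce b)) := by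
  have hEba : ce b - ce a ≠ 0 := by
    rw [show ce b - ce a = -(ce a - ce b) by ring]; exact neg_ne_zero.mpr hEab
  have hc : ce (a - b) * ce b = ce a := by
    rw [← ce_add, show a - b + b = a by ring]
  have hcne : ce (a - b) ≠ 0 := ce_ne_zero _
  rw [← hc] at hEab hEba
  try simp only [← hc]
  have hc1 : ce (a - b) - 1 ≠ 0 := by
    intro h
    apply hEab
    rw [show ce (a - b) * ce b - ce b = ce b * (ce (a - b) - 1) by ring, h, mul_zero]
  field_simp
  ring

lemma co1_5 (a b : ℝ) (hEa : ce a ≠ 0) (hEb : ce b ≠ 0) (hEab : ce a - ce b ≠ 0) :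
    (-(2 * (3 * ce (a - b) ^ 2 - ce (a - b) ^ 3 + 3 * ce (a - b) + 1) * (ce (a - b) - 1))) / (8 * ce (a - b) * (ce (a - b) - 1) ^ 2) = (3 * ce a - ce a * ce a / ce b + 3 * ce b + ce b * ce b / ce a) / (4 * (ce b - ce a)) := by
  have hEba : ce b - ce a ≠ 0 := by
    rw [show ce b - ce a = -(ce a - ce b) by ring]; exact neg_ne_zero.mpr hEab
  have hc : ce (a - b) * ce b = ce a := by
    rw [← ce_add, show a - b + b = a by ring]
  have hcne : ce (a - b) ≠ 0 := ce_ne_zero _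
  rw [← hc] at hEab hEba
  try simp only [← hc]
  have hc1 : ce (a - b) - 1 ≠ 0 := by
    intro h
    apply hEab
    rw [show ce (a - b) * ce b - ce b = ce b * (ce (a - b) - 1) by ring, h, mul_zero]
  have hc2 : 1 - ce (a - b) ≠ 0 := by
    intro h; apply hc1; linear_combination -h
  field_simp
  ring

lemma co1_6 (a b : ℝ) (hEa : ce a ≠ 0) (hEb : ce b ≠ 0) (hEab : ce a - ce b ≠ 0) :
    (-(8 * ce (a - b) * (2 * ce (a - b) + 1))) / (8 * ce (a - b) * (ce (a - b) - 1) ^ 2) = -(ce b * (2 * ce a + ce b) / (ce a - ce b) ^ 2) := by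
  have hEba : ce b - ce a ≠ 0 := by
    rw [show ce b - ce a = -(ce a - ce b) by ring]; exact neg_ne_zero.mpr hEab
  have hc : ce (a - b) * ce b = ce a := by
    rw [← ce_add, show a - b + b = a by ring]
  have hcne : ce (a - b) ≠ 0 := ce_ne_zero _
  rw [← hc] at hEab hEba
  try simp only [← hc]
  have hc1 : ce (a - b) - 1 ≠ 0 := by
    intro h
    apply hEab
    rw [show ce (a - b) * ce b - ce b = ce b * (ce (a - b) - 1) by ring, h, mul_zero]
  field_simp

lemma co1_7 (a b : ℝ) (hEa : ce a ≠ 0) (hEb : ce b ≠ 0) (hEab : ce a - ce b ≠ 0) :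
    (-(ce (a - b) ^ 2 * (ce (a - b) - 1))) / (8 * ce (a - b) * (ce (a - b) - 1) ^ 2) = ce a / (8 * (ce b - ce a)) := by
  have hEba : ce b - ce a ≠ 0 := by
    rw [show ce b - ce a = -(ce a - ce b) by ring]; exact neg_ne_zero.mpr hEab
  have hc : ce (a - b) * ce b = ce a := by
    rw [← ce_add, show a - b + b = a by ring]
  have hcne : ce (a - b) ≠ 0 := ce_ne_zero _
  rw [← hc] at hEab hEba
  try simp only [← hc]
  have hc1 : ce (a - b) - 1 ≠ 0 := by
    intro h
    apply hEab
    rw [show ce (a - b) * ce b - ce b = ce b * (ce (a - b) - 1) by ring, h, mul_zero]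
  have hc2 : 1 - ce (a - b) ≠ 0 := by
    intro h; apply hc1; linear_combination -h
  field_simp
  ring

lemma co1_8 (a b : ℝ) (hEa : ce a ≠ 0) (hEb : ce b ≠ 0) (hEab : ce a - ce b ≠ 0) :
    (-(2 * ce (a - b) * (ce (a - b) - 1) ^ 2)) / (8 * ce (a - b) * (ce (a - b) - 1) ^ 2) = -(1 / 4 : ℂ) := by
  have hEba : ce b - ce a ≠ 0 := by
    rw [show ce b - ce a = -(ce a - ce b) by ring]; exact neg_ne_zero.mpr hEab
  have hc : ce (a - b) * ce b = ce a := by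
    rw [← ce_add, show a - b + b = a by ring]
  have hcne : ce (a - b) ≠ 0 := ce_ne_zero _
  rw [← hc] at hEab hEba
  try simp only [← hc]
  have hc1 : ce (a - b) - 1 ≠ 0 := by
    intro h
    apply hEab
    rw [show ce (a - b) * ce b - ce b = ce b * (ce (a - b) - 1) by ring, h, mul_zero]
  field_simp
  ring

lemma co1_9 (a b : ℝ) (hEa : ce a ≠ 0) (hEb : ce b ≠ 0) (hEab : ce a - ce b ≠ 0) :
    (-(ce (a - b) * (ce (a - b) - 2) * (ce (a - b) - 1))) / (8 * ce (a - b) * (ce (a - b) - 1) ^ 2) = (ce a - 2 * ce b) / (8 * (ce b - ce a)) := by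
  have hEba : ce b - ce a ≠ 0 := by
    rw [show ce b - ce a = -(ce a - ce b) by ring]; exact neg_ne_zero.mpr hEab
  have hc : ce (a - b) * ce b = ce a := by
    rw [← ce_add, show a - b + b = a by ring]
  have hcne : ce (a - b) ≠ 0 := ce_ne_zero _
  rw [← hc] at hEab hEba
  try simp only [← hc]
  have hc1 : ce (a - b) - 1 ≠ 0 := by
    intro h
    apply hEab
    rw [show ce (a - b) * ce b - ce b = ce b * (ce (a - b) - 1) by ring, h, mul_zero]
  have hc2 : 1 - ce (a - b) ≠ 0 := by
    intro h; apply hc1; linear_combination -h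
  field_simp
  ring

lemma co1_10 (a b : ℝ) (hEa : ce a ≠ 0) (hEb : ce b ≠ 0) (hEab : ce a - ce b ≠ 0) :
    (ce (a - b) * (2 * ce (a - b) + 1)) / (8 * ce (a - b) * (ce (a - b) - 1) ^ 2) = ce b * (2 * ce a + ce b) / (8 * (ce a - ce b) ^ 2) := by
  have hEba : ce b - ce a ≠ 0 := by
    rw [show ce b - ce a = -(ce a - ce b) by ring]; exact neg_ne_zero.mpr hEab
  have hc : ce (a - b) * ce b = ce a := by
    rw [← ce_add, show a - b + b = a by ring]
  have hcne : ce (a - b) ≠ 0 := ce_ne_zero _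
  rw [← hc] at hEab hEba
  try simp only [← hc]
  have hc1 : ce (a - b) - 1 ≠ 0 := by
    intro h
    apply hEab
    rw [show ce (a - b) * ce b - ce b = ce b * (ce (a - b) - 1) by ring, h, mul_zero]
  field_simp

lemma row0_eq (p q : ℝ → ℝ → ℂ) (hq : CD q) (a b : ℝ) (hab : a ≠ b) :
    Dlam2_11 p a b + Dlam2_12 q a b =
      (2 * ce (a - b) * (ce (a - b) - 1)) / (16 * (ce (a - b) - 1) ^ 2) * Dx (Dx p) a b
        + ((-(2 * ce (a - b) * (ce (a - b) - 1))) / (16 * (ce (a - b) - 1) ^ 2) * Dy (Dy p) a b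
        + ((-(4 * ce (a - b))) / (16 * (ce (a - b) - 1) ^ 2) * Dx p a b
        + ((-(4 * ce (a - b))) / (16 * (ce (a - b) - 1) ^ 2) * Dy p a b
        + ((ce (a - b)) / (16 * (ce (a - b) - 1) ^ 2) * Dx (Dx q) a b
        + ((2 * ce (a - b)) / (16 * (ce (a - b) - 1) ^ 2) * Dx (Dy q) a b
        + ((ce (a - b)) / (16 * (ce (a - b) - 1) ^ 2) * Dy (Dy q) a b)))))) := by
  have hEa : ce a ≠ 0 := ce_ne_zero a
  have hEb : ce b ≠ 0 := ce_ne_zero b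
  have hEab : ce a - ce b ≠ 0 := sub_ne_zero.mpr fun h => hab (ce_injective h)
  rw [co0_1 a b hEa hEb hEab, co0_2 a b hEa hEb hEab, co0_3 a b hEa hEb hEab, co0_5 a b hEa hEb hEab, co0_6 a b hEa hEb hEab]
  simp only [Dlam2_11, Dlam2_12, SopSop hq, ce_add]
  ring

lemma row1_eq (p q : ℝ → ℝ → ℂ) (a b : ℝ) (hab : a ≠ b) :
    Dlam2_21 p a b + Dlam2_22 q a b =
      ((1 - ce (a - b) ^ 2 - 2 * ce (a - b)) * (ce (a - b) - 1) ^ 2) / (8 * ce (a - b) * (ce (a - b) - 1) ^ 2) * Dx (Dx p) a b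
        + (((ce (a - b) ^ 2 - 2 * ce (a - b) - 1) * (ce (a - b) - 1) ^ 2) / (8 * ce (a - b) * (ce (a - b) - 1) ^ 2) * Dy (Dy p) a b
        + ((4 * ce (a - b) * (ce (a - b) - 1) ^ 2) / (8 * ce (a - b) * (ce (a - b) - 1) ^ 2) * Dx (Dy p) a b
        + ((2 * (ce (a - b) ^ 2 + ce (a - b) ^ 3 + 5 * ce (a - b) - 1) * (ce (a - b) - 1)) / (8 * ce (a - b) * (ce (a - b) - 1) ^ 2) * Dx p a b
        + ((-(2 * (3 * ce (a - b) ^ 2 - ce (a - b) ^ 3 + 3 * ce (a - b) + 1) * (ce (a - b) - 1))) / (8 * ce (a - b) * (ce (a - b) - 1) ^ 2) * Dy p a b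
        + ((-(8 * ce (a - b) * (2 * ce (a - b) + 1))) / (8 * ce (a - b) * (ce (a - b) - 1) ^ 2) * p a b
        + ((-(ce (a - b) ^ 2 * (ce (a - b) - 1))) / (8 * ce (a - b) * (ce (a - b) - 1) ^ 2) * Dx (Dx q) a b
        + ((-(2 * ce (a - b) * (ce (a - b) - 1) ^ 2)) / (8 * ce (a - b) * (ce (a - b) - 1) ^ 2) * Dx (Dy q) a b
        + ((-(ce (a - b) * (ce (a - b) - 2) * (ce (a - b) - 1))) / (8 * ce (a - b) * (ce (a - b) - 1) ^ 2) * Dy (Dy q) a b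
        + ((ce (a - b) * (2 * ce (a - b) + 1)) / (8 * ce (a - b) * (ce (a - b) - 1) ^ 2) * Dx q a b
        + ((ce (a - b) * (2 * ce (a - b) + 1)) / (8 * ce (a - b) * (ce (a - b) - 1) ^ 2) * Dy q a b)))))))))) := by
  have hEa : ce a ≠ 0 := ce_ne_zero a
  have hEb : ce b ≠ 0 := ce_ne_zero b
  have hEab : ce a - ce b ≠ 0 := sub_ne_zero.mpr fun h => hab (ce_injective h)
  have hA : ce (2 * a - b) = ce a * ce a / ce b := by
    rw [show 2 * a - b = a + (a - b) by ring, ce_add, ce_sub]; ring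
  have hB : ce (2 * b - a) = ce b * ce b / ce a := by
    rw [show 2 * b - a = b + (b - a) by ring, ce_add, ce_sub]; ring
  rw [co1_1 a b hEa hEb hEab, co1_2 a b hEa hEb hEab, co1_3 a b hEa hEb hEab, co1_4 a b hEa hEb hEab, co1_5 a b hEa hEb hEab, co1_6 a b hEa hEb hEab, co1_7 a b hEa hEb hEab, co1_8 a b hEa hEb hEab, co1_9 a b hEa hEb hEab, co1_10 a b hEa hEb hEab]
  simp only [Dlam2_21, Dlam2_22, hA, hB, ce_sub]
  ring

end MirAux

/-- The matrix differential operators D(λ₁) and D(λ₂) commute on smooth ℂ²-valued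
functions on the set where e^x ≠ e^y. -/
theorem mironov_Dlam1_Dlam2_commute
    (φ : Fin 2 → ℝ → ℝ → ℂ) (hφ : ∀ i, ContDiff ℝ (⊤ : ℕ∞) (fun p : ℝ × ℝ => φ i p.1 p.2)) :
    ∀ x y : ℝ, Real.exp x ≠ Real.exp y → ∀ i : Fin 2,
      Dlam1 (Dlam2 φ) i x y = Dlam2 (Dlam1 φ) i x y := by
  intro x y hexp i
  have hxy : x ≠ y := fun h => hexp (by rw [h])
  have hp : MirAux.CD (φ 0) := hφ 0
  have hq : MirAux.CD (φ 1) := hφ 1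
  have hEx : ce x ≠ 0 := MirAux.ce_ne_zero x
  have hEy : ce y ≠ 0 := MirAux.ce_ne_zero y
  have hExy : ce x - ce y ≠ 0 := sub_ne_zero.mpr fun h => hxy (MirAux.ce_injective h)
  have hq1 : ce x / ce y - 1 ≠ 0 := by
    rw [div_sub_one hEy]; exact div_ne_zero hExy hEy
  have hce1 : ce (x - y) - 1 ≠ 0 := by
    rw [MirAux.ce_sub]; exact hq1
  have hcene : ce (x - y) ≠ 0 := MirAux.ce_ne_zero _
  have hA : ce (2 * x - y) = ce x * ce x / ce y := by
    rw [show 2 * x - y = x + (x - y) by ring, MirAux.ce_add, MirAux.ce_sub]; ring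
  have hB : ce (2 * y - x) = ce y * ce y / ce x := by
    rw [show 2 * y - x = y + (y - x) by ring, MirAux.ce_add, MirAux.ce_sub]; ring
  fin_cases i
  · show Dlam1 (Dlam2 φ) 0 x y = Dlam2 (Dlam1 φ) 0 x y
    have hden0 : (16 : ℂ) * (ce (x - y) - 1) ^ 2 ≠ 0 :=
      mul_ne_zero (by norm_num) (pow_ne_zero _ hce1)
    have E0 : Sop (fun a b => Dlam2_11 (φ 0) a b + Dlam2_12 (φ 1) a b) x y
        = Sop (fun a b => (2 * ce (a - b) * (ce (a - b) - 1)) / (16 * (ce (a - b) - 1) ^ 2) * Dx (Dx (φ 0)) a b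
          + ((-(2 * ce (a - b) * (ce (a - b) - 1))) / (16 * (ce (a - b) - 1) ^ 2) * Dy (Dy (φ 0)) a b
          + ((-(4 * ce (a - b))) / (16 * (ce (a - b) - 1) ^ 2) * Dx (φ 0) a b
          + ((-(4 * ce (a - b))) / (16 * (ce (a - b) - 1) ^ 2) * Dy (φ 0) a b
          + ((ce (a - b)) / (16 * (ce (a - b) - 1) ^ 2) * Dx (Dx (φ 1)) a b
          + ((2 * ce (a - b)) / (16 * (ce (a - b) - 1) ^ 2) * Dx (Dy (φ 1)) a b
          + ((ce (a - b)) / (16 * (ce (a - b) - 1) ^ 2) * Dy (Dy (φ 1)) a b))))))) x y :=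
      MirAux.Sop_congr _ _ x y hxy (MirAux.row0_eq (φ 0) (φ 1) hq)
    have E1 := MirAux.Sop7
      (fun t => (2 * ce t * (ce t - 1)) / (16 * (ce t - 1) ^ 2)) (fun t => (-(2 * ce t * (ce t - 1))) / (16 * (ce t - 1) ^ 2)) (fun t => (-(4 * ce t)) / (16 * (ce t - 1) ^ 2)) (fun t => (-(4 * ce t)) / (16 * (ce t - 1) ^ 2)) (fun t => (ce t) / (16 * (ce t - 1) ^ 2)) (fun t => (2 * ce t) / (16 * (ce t - 1) ^ 2)) (fun t => (ce t) / (16 * (ce t - 1) ^ 2))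
      (Dx (Dx (φ 0))) (Dy (Dy (φ 0))) (Dx (φ 0)) (Dy (φ 0)) (Dx (Dx (φ 1))) (Dx (Dy (φ 1))) (Dy (Dy (φ 1))) x y
      (DifferentiableAt.div (by fun_prop) (by fun_prop) hden0) (DifferentiableAt.div (by fun_prop) (by fun_prop) hden0) (DifferentiableAt.div (by fun_prop) (by fun_prop) hden0) (DifferentiableAt.div (by fun_prop) (by fun_prop) hden0) (DifferentiableAt.div (by fun_prop) (by fun_prop) hden0) (DifferentiableAt.div (by fun_prop) (by fun_prop) hden0) (DifferentiableAt.div (by fun_prop) (by fun_prop) hden0)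
      (MirAux.CD.hdx hp.dx.dx) (MirAux.CD.hdx hp.dy.dy) (MirAux.CD.hdx hp.dx) (MirAux.CD.hdx hp.dy) (MirAux.CD.hdx hq.dx.dx) (MirAux.CD.hdx hq.dy.dx) (MirAux.CD.hdx hq.dy.dy)
      (MirAux.CD.hdy hp.dx.dx) (MirAux.CD.hdy hp.dy.dy) (MirAux.CD.hdy hp.dx) (MirAux.CD.hdy hp.dy) (MirAux.CD.hdy hq.dx.dx) (MirAux.CD.hdy hq.dy.dx) (MirAux.CD.hdy hq.dy.dy)
    show (1/4 : ℂ) * Sop (fun a b => Dlam2_11 (φ 0) a b + Dlam2_12 (φ 1) a b) x y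
        = Dlam2_11 (fun a b => (1/4 : ℂ) * Sop (φ 0) a b) x y
          + Dlam2_12 (fun a b => (1/4 : ℂ) * Sop (φ 1) a b) x y
    rw [E0, E1]
    beta_reduce
    rw [MirAux.co0_1 x y hEx hEy hExy, MirAux.co0_2 x y hEx hEy hExy, MirAux.co0_3 x y hEx hEy hExy, MirAux.co0_5 x y hEx hEy hExy, MirAux.co0_6 x y hEx hEy hExy]
    simp only [Dlam2_11, Dlam2_12]
    simp only [MirAux.rho_xx hp, MirAux.rho_yy hp, MirAux.rho_ss hq]
    simp only [MirAux.rho_x hp, MirAux.rho_y hp]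
    simp only [MirAux.swapA hp, MirAux.swapB hp, MirAux.swapC hp,
      MirAux.swapA hq, MirAux.swapB hq, MirAux.swapC hq]
    simp only [MirAux.ce_add]
    ring
  · show Dlam1 (Dlam2 φ) 1 x y = Dlam2 (Dlam1 φ) 1 x y
    have hden1 : (8 : ℂ) * ce (x - y) * (ce (x - y) - 1) ^ 2 ≠ 0 :=
      mul_ne_zero (mul_ne_zero (by norm_num) hcene) (pow_ne_zero _ hce1)
    have E0 : Sop (fun a b => Dlam2_21 (φ 0) a b + Dlam2_22 (φ 1) a b) x y
        = Sop (fun a b => ((1 - ce (a - b) ^ 2 - 2 * ce (a - b)) * (ce (a - b) - 1) ^ 2) / (8 * ce (a - b) * (ce (a - b) - 1) ^ 2) * Dx (Dx (φ 0)) a b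
          + (((ce (a - b) ^ 2 - 2 * ce (a - b) - 1) * (ce (a - b) - 1) ^ 2) / (8 * ce (a - b) * (ce (a - b) - 1) ^ 2) * Dy (Dy (φ 0)) a b
          + ((4 * ce (a - b) * (ce (a - b) - 1) ^ 2) / (8 * ce (a - b) * (ce (a - b) - 1) ^ 2) * Dx (Dy (φ 0)) a b
          + ((2 * (ce (a - b) ^ 2 + ce (a - b) ^ 3 + 5 * ce (a - b) - 1) * (ce (a - b) - 1)) / (8 * ce (a - b) * (ce (a - b) - 1) ^ 2) * Dx (φ 0) a b
          + ((-(2 * (3 * ce (a - b) ^ 2 - ce (a - b) ^ 3 + 3 * ce (a - b) + 1) * (ce (a - b) - 1))) / (8 * ce (a - b) * (ce (a - b) - 1) ^ 2) * Dy (φ 0) a b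
          + ((-(8 * ce (a - b) * (2 * ce (a - b) + 1))) / (8 * ce (a - b) * (ce (a - b) - 1) ^ 2) * (φ 0) a b
          + ((-(ce (a - b) ^ 2 * (ce (a - b) - 1))) / (8 * ce (a - b) * (ce (a - b) - 1) ^ 2) * Dx (Dx (φ 1)) a b
          + ((-(2 * ce (a - b) * (ce (a - b) - 1) ^ 2)) / (8 * ce (a - b) * (ce (a - b) - 1) ^ 2) * Dx (Dy (φ 1)) a b
          + ((-(ce (a - b) * (ce (a - b) - 2) * (ce (a - b) - 1))) / (8 * ce (a - b) * (ce (a - b) - 1) ^ 2) * Dy (Dy (φ 1)) a b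
          + ((ce (a - b) * (2 * ce (a - b) + 1)) / (8 * ce (a - b) * (ce (a - b) - 1) ^ 2) * Dx (φ 1) a b
          + ((ce (a - b) * (2 * ce (a - b) + 1)) / (8 * ce (a - b) * (ce (a - b) - 1) ^ 2) * Dy (φ 1) a b))))))))))) x y :=
      MirAux.Sop_congr _ _ x y hxy (MirAux.row1_eq (φ 0) (φ 1))
    have E1 := MirAux.Sop11
      (fun t => ((1 - ce t ^ 2 - 2 * ce t) * (ce t - 1) ^ 2) / (8 * ce t * (ce t - 1) ^ 2)) (fun t => ((ce t ^ 2 - 2 * ce t - 1) * (ce t - 1) ^ 2) / (8 * ce t * (ce t - 1) ^ 2)) (fun t => (4 * ce t * (ce t - 1) ^ 2) / (8 * ce t * (ce t - 1) ^ 2)) (fun t => (2 * (ce t ^ 2 + ce t ^ 3 + 5 * ce t - 1) * (ce t - 1)) / (8 * ce t * (ce t - 1) ^ 2)) (fun t => (-(2 * (3 * ce t ^ 2 - ce t ^ 3 + 3 * ce t + 1) * (ce t - 1))) / (8 * ce t * (ce t - 1) ^ 2)) (fun t => (-(8 * ce t * (2 * ce t + 1))) / (8 * ce t * (ce t - 1)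 ^ 2)) (fun t => (-(ce t ^ 2 * (ce t - 1))) / (8 * ce t * (ce t - 1) ^ 2)) (fun t => (-(2 * ce t * (ce t - 1) ^ 2)) / (8 * ce t * (ce t - 1) ^ 2)) (fun t => (-(ce t * (ce t - 2) * (ce t - 1))) / (8 * ce t * (ce t - 1) ^ 2)) (fun t => (ce t * (2 * ce t + 1)) / (8 * ce t * (ce t - 1) ^ 2)) (fun t => (ce t * (2 * ce t + 1)) / (8 * ce t * (ce t - 1) ^ 2))
      (Dx (Dx (φ 0))) (Dy (Dy (φ 0))) (Dx (Dy (φ 0))) (Dx (φ 0)) (Dy (φ 0)) ((φ 0)) (Dx (Dx (φ 1))) (Dx (Dy (φ 1))) (Dy (Dy (φ 1))) (Dx (φ 1)) (Dy (φ 1)) x y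
      (DifferentiableAt.div (by fun_prop) (by fun_prop) hden1) (DifferentiableAt.div (by fun_prop) (by fun_prop) hden1) (DifferentiableAt.div (by fun_prop) (by fun_prop) hden1) (DifferentiableAt.div (by fun_prop) (by fun_prop) hden1) (DifferentiableAt.div (by fun_prop) (by fun_prop) hden1) (DifferentiableAt.div (by fun_prop) (by fun_prop) hden1) (DifferentiableAt.div (by fun_prop) (by fun_prop) hden1) (DifferentiableAt.div (by fun_prop) (by fun_prop) hden1) (DifferentiableAt.div (by fun_prop) (by fun_prop) hden1) (DifferentiableAt.div (by fun_prop) (by fun_prop) hden1) (DifferentiableAt.div (by fun_prop) (by fun_prop) hden1)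
      (MirAux.CD.hdx hp.dx.dx) (MirAux.CD.hdx hp.dy.dy) (MirAux.CD.hdx hp.dy.dx) (MirAux.CD.hdx hp.dx) (MirAux.CD.hdx hp.dy) (MirAux.CD.hdx hp) (MirAux.CD.hdx hq.dx.dx) (MirAux.CD.hdx hq.dy.dx) (MirAux.CD.hdx hq.dy.dy) (MirAux.CD.hdx hq.dx) (MirAux.CD.hdx hq.dy)
      (MirAux.CD.hdy hp.dx.dx) (MirAux.CD.hdy hp.dy.dy) (MirAux.CD.hdy hp.dy.dx) (MirAux.CD.hdy hp.dx) (MirAux.CD.hdy hp.dy) (MirAux.CD.hdy hp) (MirAux.CD.hdy hq.dx.dx) (MirAux.CD.hdy hq.dy.dx) (MirAux.CD.hdy hq.dy.dy) (MirAux.CD.hdy hq.dx) (MirAux.CD.hdy hq.dy)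
    show (1/4 : ℂ) * Sop (fun a b => Dlam2_21 (φ 0) a b + Dlam2_22 (φ 1) a b) x y
        = Dlam2_21 (fun a b => (1/4 : ℂ) * Sop (φ 0) a b) x y
          + Dlam2_22 (fun a b => (1/4 : ℂ) * Sop (φ 1) a b) x y
    rw [E0, E1]
    beta_reduce
    rw [MirAux.co1_1 x y hEx hEy hExy, MirAux.co1_2 x y hEx hEy hExy, MirAux.co1_3 x y hEx hEy hExy, MirAux.co1_4 x y hEx hEy hExy, MirAux.co1_5 x y hEx hEy hExy, MirAux.co1_6 x y hEx hEy hExy, MirAux.co1_7 x y hEx hEy hExy, MirAux.co1_8 x y hEx hEy hExy, MirAux.co1_9 x y hEx hEy hExy, MirAux.co1_10 x y hEx hEy hExy]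
    simp only [Dlam2_21, Dlam2_22]
    simp only [MirAux.rho_xx hp, MirAux.rho_yy hp, MirAux.rho_xy hp,
      MirAux.rho_xx hq, MirAux.rho_yy hq, MirAux.rho_xy hq]
    simp only [MirAux.rho_x hp, MirAux.rho_y hp, MirAux.rho_x hq, MirAux.rho_y hq]
    simp only [MirAux.swapA hp, MirAux.swapB hp, MirAux.swapC hp,
      MirAux.swapA hq, MirAux.swapB hq, MirAux.swapC hq]
    simp only [Sop]
    simp only [hA, hB, MirAux.ce_sub, MirAux.ce_add]
    ring
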